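/- arXiv:1705.03521 — 2 statements merged into one kernel-verified Lean document; each statement's English description precedes it below -/
import Mathlib

section
/- Integral representation of the derivative of the logarithm: for a positive definite operator g and Hermitian operator f on a finite-dimensional Hilbert space, ∫₀^∞ (g+t)^{−1} f (g+t)^{−1} dt = ∫_{−∞}^{∞} β₀(t) · g^{(−1−it)/2} f g^{(−1+it)/2} dt, where β₀(t) = (π/2)(cosh(πt)+1)^{−1}. -/
open Matrix Kronecker MeasureTheory
open scoped BigOperators ComplexOrder

attribute [local instance] Matrix.frobeniusNormedAddCommGroup Matrix.frobeniusNormedSpace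

variable {n : Type*} [Fintype n] [DecidableEq n]

/-- Functional calculus for Hermitian matrices (with real functions). -/
noncomputable def funcCalc (f : ℝ → ℂ) (M : Matrix n n ℂ) : Matrix n n ℂ :=
  if h : M.IsHermitian then
    (h.eigenvectorUnitary : Matrix n n ℂ) * Matrix.diagonal (fun i => f (h.eigenvalues i)) *
      (star h.eigenvectorUnitary : Matrix n n ℂ)
  else 0

/-- Matrix logarithm of a Hermitian matrix. -/
noncomputable def mlog (M : Matrix n n ℂ) : Matrix n n ℂ :=
  funcCalc (fun x => (Real.log x : ℂ)) M

/-- Matrix exponential of a Hermitian matrix. -/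
noncomputable def mexp (M : Matrix n n ℂ) : Matrix n n ℂ :=
  funcCalc (fun x => (Real.exp x : ℂ)) M

/-- Inverse square root `M^{-1/2}` of a positive definite matrix. -/
noncomputable def invSqrt (M : Matrix n n ℂ) : Matrix n n ℂ :=
  funcCalc (fun x => ((x ^ (-(1/2) : ℝ) : ℝ) : ℂ)) M

/-- Complex power `M^z` of a Hermitian (positive definite) matrix. -/
noncomputable def cpow (M : Matrix n n ℂ) (z : ℂ) : Matrix n n ℂ :=
  if h : M.IsHermitian then
    (h.eigenvectorUnitary : Matrix n n ℂ) *
      Matrix.diagonal (fun i => (h.eigenvalues i : ℂ) ^ z) *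
      (star h.eigenvectorUnitary : Matrix n n ℂ)
  else 0

/-- Quantum relative entropy `D(ρ‖σ) = Tr[ρ(log ρ - log σ)]` of density matrices. -/
noncomputable def relEnt (ρ σ : Matrix n n ℂ) : ℝ :=
  ((ρ * (mlog ρ - mlog σ)).trace).re

/-- Normalized relative entropy for not-necessarily-normalized positive operators. -/
noncomputable def relEntGen (f g : Matrix n n ℂ) : ℝ :=
  ((f.trace).re)⁻¹ * ((f * (mlog f - mlog g)).trace).re

/-- A density operator: positive semidefinite with unit trace. -/
def IsDensity (M : Matrix n n ℂ) : Prop := M.PosSemidef ∧ M.trace = 1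

/-- Support inclusion `supp ρ ⊆ supp σ`, phrased as kernel inclusion. -/
def SuppLE (ρ σ : Matrix n n ℂ) : Prop := ∀ v, σ *ᵥ v = 0 → ρ *ᵥ v = 0

/-- Trace norm `‖X‖₁ = Tr √(XᴴX)`. -/
noncomputable def trNorm (X : Matrix n n ℂ) : ℝ :=
  ((((Matrix.posSemidef_conjTranspose_mul_self X).1.eigenvectorUnitary : Matrix n n ℂ) *
      Matrix.diagonal (fun i => ((Real.sqrt ((Matrix.posSemidef_conjTranspose_mul_self X).1.eigenvalues i) : ℝ) : ℂ)) *
      (star (Matrix.posSemidef_conjTranspose_mul_self X).1.eigenvectorUnitary : Matrix n n ℂ)).trace).re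

/-- Operator norm `‖M‖∞`. -/
noncomputable def opNorm (M : Matrix n n ℂ) : ℝ :=
  ‖(Matrix.toEuclideanCLM (𝕜 := ℂ) M : EuclideanSpace ℂ n →L[ℂ] EuclideanSpace ℂ n)‖

/-- The superoperator `T_g(f) = ∫₀^∞ (g+t)⁻¹ f (g+t)⁻¹ dt`. -/
noncomputable def Tcal (g f : Matrix n n ℂ) : Matrix n n ℂ :=
  ∫ t in Set.Ioi (0 : ℝ), (g + (t : ℂ) • 1)⁻¹ * f * (g + (t : ℂ) • 1)⁻¹

/-- The probability density `β₀(t) = (π/2)(cosh(π t) + 1)⁻¹`. -/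
noncomputable def beta0 (t : ℝ) : ℝ := (Real.pi / 2) * (Real.cosh (Real.pi * t) + 1)⁻¹

variable {A B : Type*} [Fintype A] [DecidableEq A] [Fintype B] [DecidableEq B]

/-- Partial trace over `B`. -/
noncomputable def ptraceB (M : Matrix (A × B) (A × B) ℂ) : Matrix A A ℂ :=
  Matrix.of fun a a' => ∑ b, M (a, b) (a', b)

/-- Partial trace over `A`. -/
noncomputable def ptraceA (M : Matrix (A × B) (A × B) ℂ) : Matrix B B ℂ :=
  Matrix.of fun b b' => ∑ a, M (a, b) (a, b')


/-!
Diagonalize `g = U diag(λ) U*`. Both sides then have the form `U (K ⊙ U* f U) U*` for a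
kernel `K` on pairs of eigenvalues, so it suffices to compare, for `a, b > 0`,
`∫₀^∞ (a+t)⁻¹ (b+t)⁻¹ dt = (log b - log a) / (b - a)` (`= a⁻¹` if `a = b`) with
`∫ β₀(t) a^((-1-it)/2) b^((-1+it)/2) dt = (ab)^(-1/2) ∫ β₀(t) e^(iκt) dt`,
where `κ = (log b - log a)/2`. Since `β₀` is the derivative of `t ↦ σ(πt)`, `σ` the logistic
sigmoid, the substitution `x = σ(πt)` turns the Fourier transform of `β₀` into the Beta integral
`B(1 + iκ/π, 1 - iκ/π)`, which by the reflection formula is `Γ(1 + iκ/π) Γ(1 - iκ/π) = κ / sinh κ`;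
finally `(ab)^(-1/2) κ / sinh κ = (log b - log a) / (b - a)`.
-/

open Set Filter
open scoped Real Topology

theorem Complex.Gamma_one_add_mul_Gamma_one_sub {z : ℂ} (hz : z ≠ 0) :
    Gamma (1 + z) * Gamma (1 - z) = π * z / sin (π * z) := by
  rw [add_comm, Gamma_add_one z hz, mul_assoc, Gamma_mul_Gamma_one_sub]
  ring

namespace Real

theorem sigmoid_mul_one_sub_sigmoid (x : ℝ) :
    sigmoid x * (1 - sigmoid x) = (2 * (cosh x + 1))⁻¹ := by
  rw [← sigmoid_neg, sigmoid_def, sigmoid_def, cosh_eq, neg_neg, ← mul_inv]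
  congr 1
  have := mul_inv_cancel₀ (exp_pos x).ne'
  rw [exp_neg]
  linear_combination this

theorem log_sigmoid_sub_log_one_sub_sigmoid (x : ℝ) :
    log (sigmoid x) - log (1 - sigmoid x) = x := by
  rw [← sigmoid_neg, ← sigmoid_mul_rexp_neg, log_mul (sigmoid_pos x).ne' (exp_pos _).ne',
    log_exp]
  ring

theorem exp_neg_add_div_two_mul_div_sinh {x y : ℝ} (h : x ≠ y) :
    exp (-(x + y) / 2) * ((y - x) / 2 / sinh ((y - x) / 2)) = (y - x) / (exp y - exp x) := by
  have hp := exp_pos (x / 2)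
  have hq := exp_pos (y / 2)
  have hx : exp x = exp (x / 2) ^ 2 := by rw [← exp_nat_mul]; ring_nf
  have hy : exp y = exp (y / 2) ^ 2 := by rw [← exp_nat_mul]; ring_nf
  have hne : exp (x / 2) ≠ exp (y / 2) := by simpa [exp_eq_exp] using h
  rw [sinh_eq, show -(x + y) / 2 = -(x / 2) - y / 2 by ring,
    show (y - x) / 2 = y / 2 - x / 2 by ring, neg_sub, exp_sub, exp_sub, exp_sub, exp_neg, hx, hy]
  have : exp (y / 2) ^ 2 - exp (x / 2) ^ 2 ≠ 0 := fun h0 => hne (by nlinarith)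
  field_simp

end Real

theorem beta0_pos (t : ℝ) : 0 < beta0 t := by
  unfold beta0
  have := Real.cosh_pos (π * t)
  positivity

theorem hasDerivAt_sigmoid_pi_mul (t : ℝ) :
    HasDerivAt (fun t => Real.sigmoid (π * t)) (beta0 t) t := by
  convert! (Real.hasDerivAt_sigmoid (π * t)).comp t ((hasDerivAt_id t).const_mul π) using 1
  rw [Real.sigmoid_mul_one_sub_sigmoid, beta0]
  field_simp

theorem range_sigmoid_pi_mul : range (fun t => Real.sigmoid (π * t)) = Ioo 0 1 := by
  rw [← Real.range_sigmoid]
  exact (mul_left_surjective₀ Real.pi_ne_zero).range_comp Real.sigmoid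

section ChangeOfVariables

variable {E : Type*} [NormedAddCommGroup E] [NormedSpace ℝ E]

theorem integrableOn_Ioo_zero_one_iff_integrable_beta0_smul (g : ℝ → E) :
    IntegrableOn g (Ioo 0 1) ↔ Integrable (fun t => beta0 t • g (Real.sigmoid (π * t))) := by
  rw [← range_sigmoid_pi_mul, ← image_univ,
    integrableOn_image_iff_integrableOn_abs_deriv_smul MeasurableSet.univ
      (fun t _ => (hasDerivAt_sigmoid_pi_mul t).hasDerivWithinAt)
      (Real.sigmoid_injective.comp (mul_right_injective₀ Real.pi_ne_zero)).injOn,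
    integrableOn_univ]
  simp_rw [abs_of_pos (beta0_pos _)]

theorem setIntegral_Ioo_zero_one_eq_integral_beta0_smul (g : ℝ → E) :
    ∫ x in Ioo 0 1, g x = ∫ t, beta0 t • g (Real.sigmoid (π * t)) := by
  rw [← range_sigmoid_pi_mul, ← image_univ,
    integral_image_eq_integral_abs_deriv_smul MeasurableSet.univ
      (fun t _ => (hasDerivAt_sigmoid_pi_mul t).hasDerivWithinAt)
      (Real.sigmoid_injective.comp (mul_right_injective₀ Real.pi_ne_zero)).injOn,
    setIntegral_univ]
  simp_rw [abs_of_pos (beta0_pos _)]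

end ChangeOfVariables

section FourierTransform

open Complex

theorem cpow_sigmoid_mul_cpow_one_sub_sigmoid (c x : ℝ) :
    (Real.sigmoid x : ℂ) ^ (c * I) * (1 - (Real.sigmoid x : ℂ)) ^ (-(c * I)) =
      cexp (c * x * I) := by
  have h₀ := Real.sigmoid_pos x
  have h₁ : 0 < 1 - Real.sigmoid x := sub_pos.2 (Real.sigmoid_lt_one x)
  rw [cpow_def_of_ne_zero (ofReal_ne_zero.2 h₀.ne'), ← ofReal_one, ← ofReal_sub,
    cpow_def_of_ne_zero (ofReal_ne_zero.2 h₁.ne'), ← exp_add, ← ofReal_log h₀.le,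
    ← ofReal_log h₁.le]
  conv_rhs => rw [← Real.log_sigmoid_sub_log_one_sub_sigmoid x]
  push_cast
  ring_nf

-- The exponents are kept in the form `u - 1`, `v - 1` of the integrand of `betaIntegral u v`.
theorem beta0_mul_cexp_eq_smul_cpow_sigmoid (κ t : ℝ) :
    (beta0 t : ℂ) * cexp (κ * t * I) =
      beta0 t • ((Real.sigmoid (π * t) : ℂ) ^ (1 + κ / π * I - 1) *
        (1 - (Real.sigmoid (π * t) : ℂ)) ^ (1 - κ / π * I - 1)) := by
  have := cpow_sigmoid_mul_cpow_one_sub_sigmoid (κ / π) (π * t)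
  push_cast at this
  rw [add_sub_cancel_left, sub_sub_cancel_left, real_smul, this]
  field_simp

theorem integrable_beta0_mul_cexp (κ : ℝ) :
    Integrable (fun t => (beta0 t : ℂ) * cexp (κ * t * I)) := by
  simp_rw [beta0_mul_cexp_eq_smul_cpow_sigmoid]
  refine (integrableOn_Ioo_zero_one_iff_integrable_beta0_smul fun x : ℝ =>
    (x : ℂ) ^ (1 + κ / π * I - 1) * (1 - (x : ℂ)) ^ (1 - κ / π * I - 1)).1 ?_
  rw [← integrableOn_Ioc_iff_integrableOn_Ioo,
    ← intervalIntegrable_iff_integrableOn_Ioc_of_le zero_le_one]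
  exact betaIntegral_convergent (by simp) (by simp)

theorem integral_beta0_mul_cexp_eq_Gamma_mul_Gamma (κ : ℝ) :
    ∫ t, (beta0 t : ℂ) * cexp (κ * t * I) =
      Gamma (1 + κ / π * I) * Gamma (1 - κ / π * I) := by
  simp_rw [beta0_mul_cexp_eq_smul_cpow_sigmoid]
  rw [← setIntegral_Ioo_zero_one_eq_integral_beta0_smul
      (fun x : ℝ => (x : ℂ) ^ (1 + κ / π * I - 1) * (1 - (x : ℂ)) ^ (1 - κ / π * I - 1)),
    ← integral_Ioc_eq_integral_Ioo, ← intervalIntegral.integral_of_le zero_le_one,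
    ← betaIntegral, Gamma_mul_Gamma_eq_betaIntegral (by simp) (by simp), add_add_sub_cancel]
  norm_num [Gamma_ofNat_eq_factorial]

theorem integral_beta0_mul_cexp {κ : ℝ} (hκ : κ ≠ 0) :
    ∫ t, (beta0 t : ℂ) * cexp (κ * t * I) = (κ / Real.sinh κ : ℝ) := by
  have hπ : (π : ℂ) ≠ 0 := ofReal_ne_zero.2 Real.pi_ne_zero
  rw [integral_beta0_mul_cexp_eq_Gamma_mul_Gamma, Gamma_one_add_mul_Gamma_one_sub
      (by simp [hκ, Real.pi_ne_zero]), ← mul_assoc, mul_div_cancel₀ _ hπ, sin_mul_I,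
    ← ofReal_sinh]
  have hs : (Real.sinh κ : ℂ) ≠ 0 := ofReal_ne_zero.2 (Real.sinh_ne_zero.2 hκ)
  push_cast
  field_simp

end FourierTransform

section EigenvaluePair

variable {a b : ℝ}

theorem hasDerivAt_log_div_add_div_sub (hab : a ≠ b) {x : ℝ} (hax : a + x ≠ 0)
    (hbx : b + x ≠ 0) :
    HasDerivAt (fun t => Real.log ((a + t) / (b + t)) / (b - a)) ((a + x)⁻¹ * (b + x)⁻¹) x := by
  have hd := ((((hasDerivAt_id x).const_add a).div ((hasDerivAt_id x).const_add b) hbx).log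
    (div_ne_zero hax hbx)).div_const (b - a)
  convert! hd using 1
  have : b - a ≠ 0 := sub_ne_zero.2 hab.symm
  simp only [id, Pi.div_apply]
  field_simp
  ring

theorem tendsto_log_div_add_atTop (a b : ℝ) :
    Tendsto (fun t => Real.log ((a + t) / (b + t))) atTop (𝓝 0) := by
  have h : Tendsto (fun t => 1 + (a - b) / (b + t)) atTop (𝓝 1) := by
    simpa using
      (tendsto_const_nhds.div_atTop (tendsto_atTop_add_const_left _ b tendsto_id)).const_add 1
  refine (Real.log_one ▸ (Real.continuousAt_log one_ne_zero).tendsto.comp h).congr' ?_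
  filter_upwards [eventually_gt_atTop (-b)] with t ht
  have : b + t ≠ 0 := by linarith
  rw [Function.comp_apply, one_add_div this]
  ring_nf

theorem integral_Ioi_inv_add_mul_inv_add_of_ne (ha : 0 < a) (hb : 0 < b) (hab : a ≠ b) :
    IntegrableOn (fun t => (a + t)⁻¹ * (b + t)⁻¹) (Ioi 0) ∧
      ∫ t in Ioi 0, (a + t)⁻¹ * (b + t)⁻¹ = (Real.log b - Real.log a) / (b - a) := by
  have hderiv (x : ℝ) (hx : x ∈ Ici 0) : HasDerivAt
      (fun t => Real.log ((a + t) / (b + t)) / (b - a)) ((a + x)⁻¹ * (b + x)⁻¹) x := by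
    have : 0 ≤ x := hx
    exact hasDerivAt_log_div_add_div_sub hab (by positivity) (by positivity)
  have hpos (x : ℝ) (hx : x ∈ Ioi 0) : 0 ≤ (a + x)⁻¹ * (b + x)⁻¹ := by
    have : 0 < x := hx
    positivity
  have hlim := (tendsto_log_div_add_atTop a b).div_const (b - a)
  rw [zero_div] at hlim
  refine ⟨integrableOn_Ioi_deriv_of_nonneg' hderiv hpos hlim, ?_⟩
  rw [integral_Ioi_of_hasDerivAt_of_nonneg' hderiv hpos hlim, add_zero, add_zero,
    Real.log_div ha.ne' hb.ne']
  ring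

theorem integral_Ioi_inv_add_mul_inv_add_self (ha : 0 < a) :
    IntegrableOn (fun t => (a + t)⁻¹ * (a + t)⁻¹) (Ioi 0) ∧
      ∫ t in Ioi 0, (a + t)⁻¹ * (a + t)⁻¹ = a⁻¹ := by
  have hderiv (x : ℝ) (hx : x ∈ Ici 0) :
      HasDerivAt (fun t => -(a + t)⁻¹) ((a + x)⁻¹ * (a + x)⁻¹) x := by
    have hax : a + x ≠ 0 := by have : (0 : ℝ) ≤ x := hx; positivity
    convert! (((hasDerivAt_id x).const_add a).inv hax).neg using 1
    simp only [id_eq]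
    field_simp
  have hpos (x : ℝ) (_ : x ∈ Ioi 0) : 0 ≤ (a + x)⁻¹ * (a + x)⁻¹ := mul_self_nonneg _
  have hlim : Tendsto (fun t => -(a + t)⁻¹) atTop (𝓝 0) := by
    simpa using (tendsto_inv_atTop_zero.comp (tendsto_atTop_add_const_left _ a tendsto_id)).neg
  refine ⟨integrableOn_Ioi_deriv_of_nonneg' hderiv hpos hlim, ?_⟩
  rw [integral_Ioi_of_hasDerivAt_of_nonneg' hderiv hpos hlim]
  simp

open Complex

theorem ofReal_cpow_mul_ofReal_cpow (ha : 0 < a) (hb : 0 < b) (t : ℝ) :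
    (a : ℂ) ^ ((-1 - t * I) / 2) * (b : ℂ) ^ ((-1 + t * I) / 2) =
      (Real.exp (-(Real.log a + Real.log b) / 2) : ℂ) *
        cexp (((Real.log b - Real.log a) / 2 : ℝ) * t * I) := by
  rw [cpow_def_of_ne_zero (ofReal_ne_zero.2 ha.ne'), cpow_def_of_ne_zero (ofReal_ne_zero.2 hb.ne'),
    ← ofReal_log ha.le, ← ofReal_log hb.le, ofReal_exp, ← exp_add, ← exp_add]
  push_cast
  ring_nf

theorem integrableOn_Ioi_inv_add_mul_inv_add (ha : 0 < a) (hb : 0 < b) :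
    IntegrableOn (fun t : ℝ => ((a : ℂ) + t)⁻¹ * ((b : ℂ) + t)⁻¹) (Ioi 0) := by
  have hre : IntegrableOn (fun t => (a + t)⁻¹ * (b + t)⁻¹) (Ioi 0) := by
    rcases eq_or_ne a b with rfl | hab
    · exact (integral_Ioi_inv_add_mul_inv_add_self ha).1
    · exact (integral_Ioi_inv_add_mul_inv_add_of_ne ha hb hab).1
  simpa [IntegrableOn] using hre.ofReal (𝕜 := ℂ)

theorem integrable_beta0_mul_cpow (ha : 0 < a) (hb : 0 < b) :
    Integrable (fun t : ℝ =>
      (beta0 t : ℂ) * ((a : ℂ) ^ ((-1 - t * I) / 2) * (b : ℂ) ^ ((-1 + t * I) / 2))) := by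
  simp_rw [ofReal_cpow_mul_ofReal_cpow ha hb, mul_left_comm (beta0 _ : ℂ)]
  exact (integrable_beta0_mul_cexp _).const_mul _

theorem integral_Ioi_inv_add_mul_inv_add_eq_integral_beta0_mul_cpow (ha : 0 < a) (hb : 0 < b) :
    ∫ t : ℝ in Ioi 0, ((a : ℂ) + t)⁻¹ * ((b : ℂ) + t)⁻¹ =
      ∫ t, (beta0 t : ℂ) *
        ((a : ℂ) ^ ((-1 - t * I) / 2) * (b : ℂ) ^ ((-1 + t * I) / 2)) := by
  have hlhs : ∫ t : ℝ in Ioi 0, ((a : ℂ) + t)⁻¹ * ((b : ℂ) + t)⁻¹ =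
      ((∫ t in Ioi 0, (a + t)⁻¹ * (b + t)⁻¹ : ℝ) : ℂ) := by
    rw [← integral_complex_ofReal]
    push_cast
    rfl
  simp_rw [ofReal_cpow_mul_ofReal_cpow ha hb, mul_left_comm (beta0 _ : ℂ)]
  rw [integral_const_mul, hlhs]
  rcases eq_or_ne a b with rfl | hab
  · rw [(integral_Ioi_inv_add_mul_inv_add_self ha).2, integral_beta0_mul_cexp_eq_Gamma_mul_Gamma]
    simp [add_self_div_two, Real.exp_neg, Real.exp_log ha]
  · have hlog : Real.log a ≠ Real.log b := fun h => hab (Real.log_injOn_pos ha hb h)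
    rw [(integral_Ioi_inv_add_mul_inv_add_of_ne ha hb hab).2,
      integral_beta0_mul_cexp (by intro h; apply hlog; linarith), ← ofReal_mul,
      Real.exp_neg_add_div_two_mul_div_sinh hlog, Real.exp_log ha, Real.exp_log hb]

end EigenvaluePair

namespace Matrix

variable {m : Type*} [Fintype m] [DecidableEq m]

theorem integral_mul_of_mul {α : Type*} [MeasurableSpace α] {μ : Measure α}
    (U V : Matrix m m ℂ) {c : m → m → α → ℂ} (hc : ∀ i j, Integrable (c i j) μ) :
    ∫ x, U * of (fun i j => c i j x) * V ∂μ =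
      U * of (fun i j => ∫ x, c i j x ∂μ) * V := by
  have hsum (M : Matrix m m ℂ) :
      U * M * V = ∑ p : m × m, M p.1 p.2 • (U * single p.1 p.2 1 * V) := by
    conv_lhs => rw [matrix_eq_sum_single M]
    rw [← Finset.sum_product', Finset.mul_sum, Finset.sum_mul]
    refine Finset.sum_congr rfl fun p _ => ?_
    rw [show single p.1 p.2 (M p.1 p.2) = M p.1 p.2 • single p.1 p.2 1 by
      rw [smul_single, smul_eq_mul, mul_one], Matrix.mul_smul, Matrix.smul_mul]
  conv_rhs => rw [hsum]
  rw [integral_congr_ae (ae_of_all _ fun x => hsum _),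
    integral_finsetSum _ fun p _ => (hc p.1 p.2).smul_const _]
  simp only [of_apply, integral_smul_const]

theorem inv_mul_mul_star_of_mem_unitaryGroup {α : Type*} [CommRing α] [StarRing α]
    {U : Matrix m m α} (hU : U ∈ unitaryGroup m α) (D : Matrix m m α) :
    (U * D * star U)⁻¹ = U * D⁻¹ * star U := by
  rw [mul_inv_rev, mul_inv_rev, inv_eq_left_inv (mem_unitaryGroup_iff.mp hU),
    inv_eq_left_inv (mem_unitaryGroup_iff'.mp hU), Matrix.mul_assoc]

theorem mul_diagonal_mul_mul_mul_diagonal_mul {α : Type*} [CommSemiring α]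
    (U V W X f : Matrix m m α) (d e : m → α) :
    U * diagonal d * V * f * (W * diagonal e * X) =
      U * of (fun i j => d i * e j * (V * f * W) i j) * X := by
  calc U * diagonal d * V * f * (W * diagonal e * X)
      _ = U * (diagonal d * (V * f * W) * diagonal e) * X := by simp only [Matrix.mul_assoc]
      _ = _ := by
        congr 2
        ext i j
        rw [mul_diagonal, diagonal_mul, of_apply]
        ring

namespace IsHermitian

variable {A : Matrix m m ℂ} (hA : A.IsHermitian)
include hA

theorem add_smul_one_eq_mul_diagonal_mul (s : ℂ) :
    A + s • 1 = (hA.eigenvectorUnitary : Matrix m m ℂ) *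
      diagonal (fun i => (hA.eigenvalues i : ℂ) + s) *
        star (hA.eigenvectorUnitary : Matrix m m ℂ) := by
  have hU := mem_unitaryGroup_iff.mp hA.eigenvectorUnitary.2
  conv_lhs => rw [hA.spectral_theorem, Unitary.conjStarAlgAut_apply]
  rw [← diagonal_add, Matrix.mul_add, Matrix.add_mul, ← smul_one_eq_diagonal, Matrix.mul_smul,
    Matrix.mul_one, Matrix.smul_mul, hU]
  rfl

theorem inv_add_smul_one_eq_mul_diagonal_mul {s : ℂ}
    (hs : ∀ i, (hA.eigenvalues i : ℂ) + s ≠ 0) :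
    (A + s • 1)⁻¹ = (hA.eigenvectorUnitary : Matrix m m ℂ) *
      diagonal (fun i => ((hA.eigenvalues i : ℂ) + s)⁻¹) *
        star (hA.eigenvectorUnitary : Matrix m m ℂ) := by
  rw [hA.add_smul_one_eq_mul_diagonal_mul,
    inv_mul_mul_star_of_mem_unitaryGroup hA.eigenvectorUnitary.2]
  congr 2
  refine inv_eq_right_inv ?_
  rw [diagonal_mul_diagonal, ← diagonal_one]
  exact congrArg diagonal (funext fun i => mul_inv_cancel₀ (hs i))

theorem cpow_eq_mul_diagonal_mul (z : ℂ) :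
    cpow A z = (hA.eigenvectorUnitary : Matrix m m ℂ) *
      diagonal (fun i => (hA.eigenvalues i : ℂ) ^ z) *
        star (hA.eigenvectorUnitary : Matrix m m ℂ) :=
  dif_pos hA

theorem smul_cpow_mul_mul_cpow (f : Matrix m m ℂ) (r : ℝ) (z w : ℂ) :
    r • (cpow A z * f * cpow A w) =
      (hA.eigenvectorUnitary : Matrix m m ℂ) * of (fun i j => (r : ℂ) *
        ((hA.eigenvalues i : ℂ) ^ z * (hA.eigenvalues j : ℂ) ^ w) *
          (star (hA.eigenvectorUnitary : Matrix m m ℂ) * f * hA.eigenvectorUnitary) i j) *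
        star (hA.eigenvectorUnitary : Matrix m m ℂ) := by
  rw [hA.cpow_eq_mul_diagonal_mul, hA.cpow_eq_mul_diagonal_mul,
    mul_diagonal_mul_mul_mul_diagonal_mul, ← Matrix.smul_mul, ← Matrix.mul_smul]
  congr 2
  ext i j
  simp only [Matrix.smul_apply, of_apply, Complex.real_smul]
  ring

end IsHermitian

theorem PosDef.inv_add_smul_one_mul_mul_inv_add_smul_one {A : Matrix m m ℂ} (hA : A.PosDef)
    (f : Matrix m m ℂ) {t : ℝ} (ht : 0 ≤ t) :
    (A + (t : ℂ) • 1)⁻¹ * f * (A + (t : ℂ) • 1)⁻¹ =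
      (hA.isHermitian.eigenvectorUnitary : Matrix m m ℂ) * of (fun i j =>
        ((hA.isHermitian.eigenvalues i : ℂ) + t)⁻¹ *
          ((hA.isHermitian.eigenvalues j : ℂ) + t)⁻¹ *
          (star (hA.isHermitian.eigenvectorUnitary : Matrix m m ℂ) * f *
            hA.isHermitian.eigenvectorUnitary) i j) *
        star (hA.isHermitian.eigenvectorUnitary : Matrix m m ℂ) := by
  rw [hA.isHermitian.inv_add_smul_one_eq_mul_diagonal_mul fun i => ?_,
    mul_diagonal_mul_mul_mul_diagonal_mul]
  exact_mod_cast (add_pos_of_pos_of_nonneg (hA.eigenvalues_pos i) ht).ne'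

end Matrix

theorem Tcal_eq_beta_integral_general
    (g f : Matrix n n ℂ) (hg : g.PosDef) :
    Tcal g f = ∫ t : ℝ, beta0 t •
      (cpow g ((-1 - (t : ℂ) * Complex.I) / 2) * f * cpow g ((-1 + (t : ℂ) * Complex.I) / 2)) := by
  have he := hg.eigenvalues_pos
  rw [Tcal, setIntegral_congr_fun measurableSet_Ioi fun t ht =>
      hg.inv_add_smul_one_mul_mul_inv_add_smul_one f (le_of_lt ht),
    integral_congr_ae (ae_of_all _ fun t => hg.isHermitian.smul_cpow_mul_mul_cpow f _ _ _),
    integral_mul_of_mul _ _ fun i j => ?_, integral_mul_of_mul _ _ fun i j => ?_]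
  · congr 2
    ext i j
    simp only [of_apply, integral_mul_const,
      integral_Ioi_inv_add_mul_inv_add_eq_integral_beta0_mul_cpow (he i) (he j)]
  · exact (integrable_beta0_mul_cpow (he i) (he j)).mul_const _
  · exact (integrableOn_Ioi_inv_add_mul_inv_add (he i) (he j)).mul_const _

theorem Tcal_eq_beta_integral
    (g f : Matrix n n ℂ) (hg : g.PosDef) (hf : f.IsHermitian) :
    Tcal g f = ∫ t : ℝ, beta0 t •
      (cpow g ((-1 - (t : ℂ) * Complex.I) / 2) * f * cpow g ((-1 + (t : ℂ) * Complex.I) / 2)) :=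
  Tcal_eq_beta_integral_general g f hg
end

section
/- Step 1 of quasi-factorization: for bipartite density operators ρ_AB, σ_AB with full-rank σ_AB, D(ρ_AB‖σ_AB) ≥ D(ρ_A‖σ_A) + D(ρ_B‖σ_B) − log Tr[M], where M = exp(log σ_AB − log(σ_A⊗σ_B) + log(ρ_A⊗ρ_B)). Moreover if σ_AB = σ_A⊗σ_B then log Tr[M] = 0. -/
open Matrix Kronecker MeasureTheory
open scoped BigOperators ComplexOrder

attribute [local instance] Matrix.frobeniusNormedAddCommGroup Matrix.frobeniusNormedSpace

variable {n : Type*} [Fintype n] [DecidableEq n]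

variable {A B : Type*} [Fintype A] [DecidableEq A] [Fintype B] [DecidableEq B]

/-!
Put `H = log σ - log (σ_A ⊗ σ_B) + log (ρ_A ⊗ ρ_B)` and `M = exp H`. Because
`log (P ⊗ Q) = log P ⊗ 1 + 1 ⊗ log Q` and `Tr[ρ (X ⊗ 1)] = Tr[ρ_A X]`, the three relative
entropies combine into `D(ρ‖σ) - D(ρ_A‖σ_A) - D(ρ_B‖σ_B) = Tr[ρ (log ρ - log M)]`, and the latter
is at least `-log Tr M`. For that bound, write `ρ` and `M` in their eigenbases `(p, u)` and
`(q, v)`: the trace becomes a sum weighted by the doubly stochastic matrix `|⟨u_i, v_j⟩|²`, and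
the scalar inequality `a - b ≤ a (log a - log b)` applies termwise once `q` is normalized.
When `σ = σ_A ⊗ σ_B`, `M = ρ_A ⊗ ρ_B` has trace one.
-/

open Unitary Polynomial

lemma aeval_conj_diagonal (U : unitaryGroup n ℂ) (c : n → ℂ) (p : ℂ[X]) :
    aeval (conjStarAlgAut ℂ _ U (diagonal c)) p =
      conjStarAlgAut ℂ _ U (diagonal fun i => p.eval (c i)) := by
  rw [aeval_algHom_apply, show diagonal c = diagonalAlgHom ℂ c from rfl, aeval_algHom_apply,
    aeval_pi]
  rfl

lemma Matrix.IsHermitian.eq_conj_diagonal {M : Matrix n n ℂ} (hM : M.IsHermitian) :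
    M = conjStarAlgAut ℂ _ hM.eigenvectorUnitary (diagonal fun i => (hM.eigenvalues i : ℂ)) :=
  hM.spectral_theorem

lemma isHermitian_conj_diagonal (U : unitaryGroup n ℂ) (d : n → ℝ) :
    (conjStarAlgAut ℂ _ U (diagonal fun i => (d i : ℂ))).IsHermitian :=
  IsSelfAdjoint.map (isHermitian_diagonal_of_self_adjoint (fun i => (d i : ℂ)) (by ext; simp)) _

lemma trace_conjStarAlgAut (U : unitaryGroup n ℂ) (X : Matrix n n ℂ) :
    (conjStarAlgAut ℂ _ U X).trace = X.trace := by
  rw [conjStarAlgAut_apply, trace_mul_cycle, mem_unitaryGroup_iff'.mp U.2, Matrix.one_mul]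

lemma trace_conj_diagonal_mul_conj_diagonal (U V : unitaryGroup n ℂ) (c d : n → ℝ) :
    (conjStarAlgAut ℂ _ U (diagonal fun i => (c i : ℂ)) *
        conjStarAlgAut ℂ _ V (diagonal fun j => (d j : ℂ))).trace =
      ((∑ i, ∑ j, Complex.normSq (((star U * V : unitaryGroup n ℂ) : Matrix n n ℂ) i j) * c i * d j
        : ℝ) : ℂ) := by
  set W := star U * V
  have hV : V = U * W := by simp [W, ← mul_assoc]
  rw [hV, map_mul, StarAlgEquiv.mul_apply, ← map_mul, trace_conjStarAlgAut, conjStarAlgAut_apply]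
  simp only [trace, diag, diagonal_mul]
  simp only [mul_apply, diagonal_apply, mul_ite, mul_zero, Finset.sum_ite_eq', Finset.mem_univ,
    if_true, star_apply, Finset.mul_sum]
  push_cast
  refine Finset.sum_congr rfl fun i _ => Finset.sum_congr rfl fun j _ => ?_
  rw [← Complex.mul_conj]
  simp only [RCLike.star_def]
  ring

lemma funcCalc_of_isHermitian (f : ℝ → ℂ) {M : Matrix n n ℂ} (hM : M.IsHermitian) :
    funcCalc f M = conjStarAlgAut ℂ _ hM.eigenvectorUnitary (diagonal (f ∘ hM.eigenvalues)) :=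
  dif_pos hM

/-- The functional calculus can be computed from any unitary diagonalization: both sides are
the value at the matrix of a polynomial interpolating `f` on all the eigenvalues involved. -/
lemma funcCalc_conj_diagonal (f : ℝ → ℂ) (U : unitaryGroup n ℂ) (d : n → ℝ) :
    funcCalc f (conjStarAlgAut ℂ _ U (diagonal fun i => (d i : ℂ))) =
      conjStarAlgAut ℂ _ U (diagonal (f ∘ d)) := by
  set M := conjStarAlgAut ℂ _ U (diagonal fun i => (d i : ℂ))
  have hM : M.IsHermitian := isHermitian_conj_diagonal U d
  let s := Finset.univ.image d ∪ Finset.univ.image hM.eigenvalues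
  let p := Lagrange.interpolate s (fun x : ℝ => (x : ℂ)) f
  have hp : ∀ x ∈ s, p.eval (x : ℂ) = f x := fun x hx =>
    Lagrange.eval_interpolate_at_node _ (fun a _ b _ h => Complex.ofReal_inj.mp h) hx
  have h₁ : aeval M p = conjStarAlgAut ℂ _ U (diagonal (f ∘ d)) := by
    rw [aeval_conj_diagonal]
    congr 2
    ext i
    exact hp _ (Finset.mem_union_left _ (Finset.mem_image_of_mem _ (Finset.mem_univ i)))
  have h₂ : aeval M p = funcCalc f M := by
    rw [funcCalc_of_isHermitian f hM]
    conv_lhs => rw [hM.eq_conj_diagonal, aeval_conj_diagonal]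
    congr 2
    ext i
    exact hp _ (Finset.mem_union_right _ (Finset.mem_image_of_mem _ (Finset.mem_univ i)))
  rw [← h₁, h₂]

lemma mlog_conj_diagonal (U : unitaryGroup n ℂ) (d : n → ℝ) :
    mlog (conjStarAlgAut ℂ _ U (diagonal fun i => (d i : ℂ))) =
      conjStarAlgAut ℂ _ U (diagonal fun i => (Real.log (d i) : ℂ)) :=
  funcCalc_conj_diagonal _ U d

lemma mexp_conj_diagonal (U : unitaryGroup n ℂ) (d : n → ℝ) :
    mexp (conjStarAlgAut ℂ _ U (diagonal fun i => (d i : ℂ))) =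
      conjStarAlgAut ℂ _ U (diagonal fun i => (Real.exp (d i) : ℂ)) :=
  funcCalc_conj_diagonal _ U d

lemma mlog_of_isHermitian {M : Matrix n n ℂ} (hM : M.IsHermitian) :
    mlog M = conjStarAlgAut ℂ _ hM.eigenvectorUnitary
      (diagonal fun i => (Real.log (hM.eigenvalues i) : ℂ)) :=
  funcCalc_of_isHermitian _ hM

lemma mexp_of_isHermitian {M : Matrix n n ℂ} (hM : M.IsHermitian) :
    mexp M = conjStarAlgAut ℂ _ hM.eigenvectorUnitary
      (diagonal fun i => (Real.exp (hM.eigenvalues i) : ℂ)) :=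
  funcCalc_of_isHermitian _ hM

lemma isHermitian_mlog (M : Matrix n n ℂ) : (mlog M).IsHermitian := by
  by_cases hM : M.IsHermitian
  · rw [mlog_of_isHermitian hM]
    exact isHermitian_conj_diagonal _ _
  · simp [mlog, funcCalc, hM]

lemma Matrix.IsHermitian.posDef_mexp {M : Matrix n n ℂ} (hM : M.IsHermitian) :
    (mexp M).PosDef := by
  rw [mexp_of_isHermitian hM, conjStarAlgAut_apply,
    IsUnit.posDef_star_right_conjugate_iff Unitary.isUnit_coe]
  exact PosDef.diagonal fun i => Complex.zero_lt_real.mpr (Real.exp_pos _)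

lemma mlog_mexp {M : Matrix n n ℂ} (hM : M.IsHermitian) : mlog (mexp M) = M := by
  rw [mexp_of_isHermitian hM, mlog_conj_diagonal]
  simp only [Real.log_exp]
  exact hM.eq_conj_diagonal.symm

lemma mexp_mlog {M : Matrix n n ℂ} (hM : M.PosDef) : mexp (mlog M) = M := by
  rw [mlog_of_isHermitian hM.isHermitian, mexp_conj_diagonal]
  simp only [Real.exp_log (hM.eigenvalues_pos _)]
  exact hM.isHermitian.eq_conj_diagonal.symm

lemma sub_le_mul_log_sub_log {a b : ℝ} (ha : 0 ≤ a) (hb : 0 < b) :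
    a - b ≤ a * (Real.log a - Real.log b) := by
  rcases ha.eq_or_lt with rfl | ha
  · simpa using hb.le
  have h := mul_le_mul_of_nonneg_left
    (Real.self_sub_one_le_mul_log (div_nonneg ha.le hb.le)) hb.le
  rw [Real.log_div ha.ne' hb.ne', mul_sub, mul_one, mul_div_cancel₀ _ hb.ne', ← mul_assoc,
    mul_div_cancel₀ _ hb.ne'] at h
  exact h

lemma normSq_mem_doublyStochastic (W : unitaryGroup n ℂ) :
    (of fun i j => Complex.normSq ((W : Matrix n n ℂ) i j)) ∈ doublyStochastic ℝ n := by
  have hrow (i : n) : ∑ j, ((Complex.normSq ((W : Matrix n n ℂ) i j) : ℝ) : ℂ) = 1 := by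
    simpa [mul_apply, one_apply, ← Complex.mul_conj] using
      congrFun (congrFun (mem_unitaryGroup_iff.mp W.2) i) i
  have hcol (j : n) : ∑ i, ((Complex.normSq ((W : Matrix n n ℂ) i j) : ℝ) : ℂ) = 1 := by
    simpa [mul_apply, one_apply, ← Complex.mul_conj, mul_comm] using
      congrFun (congrFun (mem_unitaryGroup_iff'.mp W.2) j) j
  exact mem_doublyStochastic_iff_sum.mpr
    ⟨fun i j => Complex.normSq_nonneg _, fun i => by exact_mod_cast hrow i,
      fun j => by exact_mod_cast hcol j⟩

lemma neg_log_sum_le_of_mem_doublyStochastic {w : Matrix n n ℝ} (hw : w ∈ doublyStochastic ℝ n)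
    {p q : n → ℝ} (hp : ∀ i, 0 ≤ p i) (hp1 : ∑ i, p i = 1) (hq : ∀ j, 0 < q j) :
    -Real.log (∑ j, q j) ≤
      ∑ i, p i * Real.log (p i) - ∑ i, ∑ j, w i j * p i * Real.log (q j) := by
  have : Nonempty n := by
    by_contra h
    simp [not_nonempty_iff.mp h] at hp1
  set t := ∑ j, q j
  have ht : 0 < t := Finset.sum_pos (fun j _ => hq j) Finset.univ_nonempty
  have hterm (i j : n) : w i j * (p i - q j / t) ≤
      w i j * (p i * Real.log (p i) - p i * Real.log (q j) + p i * Real.log t) := by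
    refine mul_le_mul_of_nonneg_left ?_ (nonneg_of_mem_doublyStochastic hw)
    have := sub_le_mul_log_sub_log (hp i) (div_pos (hq j) ht)
    rw [Real.log_div (hq j).ne' ht.ne'] at this
    linarith
  have hsum := Finset.sum_le_sum fun i (_ : i ∈ Finset.univ) =>
    Finset.sum_le_sum fun j (_ : j ∈ Finset.univ) => hterm i j
  have hrow (f : n → ℝ) : ∑ i, ∑ j, w i j * f i = ∑ i, f i := by
    simp [← Finset.sum_mul, sum_row_of_mem_doublyStochastic hw]
  have hcol (f : n → ℝ) : ∑ i, ∑ j, w i j * f j = ∑ j, f j := by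
    rw [Finset.sum_comm]
    simp [← Finset.sum_mul, sum_col_of_mem_doublyStochastic hw]
  simp only [mul_sub, mul_add, Finset.sum_sub_distrib, Finset.sum_add_distrib] at hsum
  rw [hrow, hcol (q · / t), hrow (fun i => p i * Real.log (p i)), hrow (fun i => p i * Real.log t),
    hp1, ← Finset.sum_div, div_self ht.ne', ← Finset.sum_mul, hp1] at hsum
  simp only [mul_assoc]
  linarith

lemma neg_log_trace_le_relEnt {ρ M : Matrix n n ℂ} (hρ : ρ.PosSemidef) (hρ1 : ρ.trace = 1)
    (hM : M.PosDef) : -Real.log M.trace.re ≤ relEnt ρ M := by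
  set U := hρ.isHermitian.eigenvectorUnitary
  set V := hM.isHermitian.eigenvectorUnitary
  set p := hρ.isHermitian.eigenvalues
  set q := hM.isHermitian.eigenvalues
  have hp1 : ∑ i, p i = 1 := by
    simpa [hρ1, eq_comm, p] using congrArg Complex.re hρ.isHermitian.trace_eq_sum_eigenvalues
  have hq : M.trace.re = ∑ j, q j := by simp [hM.isHermitian.trace_eq_sum_eigenvalues, q]
  have hρlogρ : (ρ * mlog ρ).trace = ((∑ i, p i * Real.log (p i) : ℝ) : ℂ) := by
    rw [mlog_of_isHermitian hρ.isHermitian]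
    nth_rw 1 [hρ.isHermitian.eq_conj_diagonal]
    rw [trace_conj_diagonal_mul_conj_diagonal, star_mul_self]
    simp [one_apply, apply_ite, p]
  have hρlogM : (ρ * mlog M).trace = ((∑ i, ∑ j,
      Complex.normSq (((star U * V : unitaryGroup n ℂ) : Matrix n n ℂ) i j) * p i *
        Real.log (q j) : ℝ) : ℂ) := by
    rw [mlog_of_isHermitian hM.isHermitian]
    nth_rw 1 [hρ.isHermitian.eq_conj_diagonal]
    exact trace_conj_diagonal_mul_conj_diagonal _ _ _ _
  rw [relEnt, Matrix.mul_sub, trace_sub, hρlogρ, hρlogM, hq, ← Complex.ofReal_sub,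
    Complex.ofReal_re]
  exact neg_log_sum_le_of_mem_doublyStochastic (normSq_mem_doublyStochastic _)
    hρ.eigenvalues_nonneg hp1 hM.eigenvalues_pos

def kroneckerUnitary (U : unitaryGroup A ℂ) (V : unitaryGroup B ℂ) : unitaryGroup (A × B) ℂ :=
  ⟨(U : Matrix A A ℂ) ⊗ₖ (V : Matrix B B ℂ), kronecker_mem_unitary U.2 V.2⟩

lemma conjStarAlgAut_kronecker (U : unitaryGroup A ℂ) (V : unitaryGroup B ℂ)
    (X : Matrix A A ℂ) (Y : Matrix B B ℂ) :
    conjStarAlgAut ℂ (Matrix A A ℂ) U X ⊗ₖ conjStarAlgAut ℂ (Matrix B B ℂ) V Y =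
      conjStarAlgAut ℂ (Matrix (A × B) (A × B) ℂ) (kroneckerUnitary U V) (X ⊗ₖ Y) := by
  rw [conjStarAlgAut_apply, conjStarAlgAut_apply, conjStarAlgAut_apply, mul_kronecker_mul,
    mul_kronecker_mul]
  exact congrArg (_ * ·) (conjTranspose_kronecker _ _).symm

lemma mlog_kronecker {P : Matrix A A ℂ} {Q : Matrix B B ℂ} (hP : P.PosDef) (hQ : Q.PosDef) :
    mlog (P ⊗ₖ Q) = mlog P ⊗ₖ 1 + 1 ⊗ₖ mlog Q := by
  set a := hP.isHermitian.eigenvalues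
  set b := hQ.isHermitian.eigenvalues
  have hPQ : P ⊗ₖ Q = conjStarAlgAut ℂ (Matrix (A × B) (A × B) ℂ)
      (kroneckerUnitary hP.isHermitian.eigenvectorUnitary hQ.isHermitian.eigenvectorUnitary)
      (diagonal fun p => ((a p.1 * b p.2 : ℝ) : ℂ)) := by
    conv_lhs => rw [hP.isHermitian.eq_conj_diagonal, hQ.isHermitian.eq_conj_diagonal]
    rw [conjStarAlgAut_kronecker, diagonal_kronecker_diagonal]
    simp only [Complex.ofReal_mul]
    rfl
  have hlog : (diagonal fun p : A × B => (Real.log (a p.1 * b p.2) : ℂ)) =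
      (diagonal fun i => (Real.log (a i) : ℂ)) ⊗ₖ 1 +
        1 ⊗ₖ diagonal fun j => (Real.log (b j) : ℂ) := by
    rw [← diagonal_one, diagonal_kronecker_diagonal, ← diagonal_one, diagonal_kronecker_diagonal,
      diagonal_add]
    congr 1
    ext p
    rw [Real.log_mul (hP.eigenvalues_pos _).ne' (hQ.eigenvalues_pos _).ne']
    simp [a, b]
  rw [hPQ, mlog_conj_diagonal, hlog, map_add, ← conjStarAlgAut_kronecker,
    ← conjStarAlgAut_kronecker, map_one, map_one, mlog_of_isHermitian, mlog_of_isHermitian]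

lemma ptraceB_eq_sum_submatrix {A B : Type*} [Fintype B] (M : Matrix (A × B) (A × B) ℂ) :
    ptraceB M = ∑ b, M.submatrix (·, b) (·, b) := by
  ext a a'
  simp [ptraceB, Matrix.sum_apply]

lemma ptraceA_eq_sum_submatrix {A B : Type*} [Fintype A] (M : Matrix (A × B) (A × B) ℂ) :
    ptraceA M = ∑ a, M.submatrix (a, ·) (a, ·) := by
  ext b b'
  simp [ptraceA, Matrix.sum_apply]

lemma Matrix.PosDef.ptraceB {A B : Type*} [Fintype B] [Nonempty B]
    {M : Matrix (A × B) (A × B) ℂ} (hM : M.PosDef) : (ptraceB M).PosDef := by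
  rw [ptraceB_eq_sum_submatrix]
  exact posDef_sum Finset.univ_nonempty fun b _ =>
    hM.submatrix fun a a' h => congrArg Prod.fst h

lemma Matrix.PosDef.ptraceA {A B : Type*} [Fintype A] [Nonempty A]
    {M : Matrix (A × B) (A × B) ℂ} (hM : M.PosDef) : (ptraceA M).PosDef := by
  rw [ptraceA_eq_sum_submatrix]
  exact posDef_sum Finset.univ_nonempty fun a _ =>
    hM.submatrix fun b b' h => congrArg Prod.snd h

lemma trace_ptraceB {A B : Type*} [Fintype A] [Fintype B] (M : Matrix (A × B) (A × B) ℂ) :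
    (ptraceB M).trace = M.trace := by
  simp [trace, ptraceB, Fintype.sum_prod_type]

lemma trace_ptraceA {A B : Type*} [Fintype A] [Fintype B] (M : Matrix (A × B) (A × B) ℂ) :
    (ptraceA M).trace = M.trace := by
  simp [trace, ptraceA, Fintype.sum_prod_type, Finset.sum_comm (γ := A)]

lemma trace_mul_kronecker_one {A B : Type*} [Fintype A] [Fintype B] [DecidableEq B]
    (M : Matrix (A × B) (A × B) ℂ) (X : Matrix A A ℂ) :
    (M * (X ⊗ₖ (1 : Matrix B B ℂ))).trace = (ptraceB M * X).trace := by
  simp only [trace, diag, mul_apply, ptraceB, of_apply, kroneckerMap_apply, one_apply,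
    Fintype.sum_prod_type, mul_ite, mul_one, mul_zero, Finset.sum_ite_eq', Finset.mem_univ,
    if_true, Finset.sum_mul]
  exact Finset.sum_congr rfl fun a _ => Finset.sum_comm

lemma trace_mul_one_kronecker {A B : Type*} [Fintype A] [DecidableEq A] [Fintype B]
    (M : Matrix (A × B) (A × B) ℂ) (Y : Matrix B B ℂ) :
    (M * ((1 : Matrix A A ℂ) ⊗ₖ Y)).trace = (ptraceA M * Y).trace := by
  simp only [trace, diag, mul_apply, ptraceA, of_apply, kroneckerMap_apply, one_apply,
    Fintype.sum_prod_type, ite_mul, one_mul, zero_mul, mul_ite, mul_zero, Finset.sum_ite_irrel,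
    Finset.sum_const_zero, Finset.sum_ite_eq', Finset.mem_univ, if_true, Finset.sum_mul]
  rw [Finset.sum_comm]
  exact Finset.sum_congr rfl fun _ _ => Finset.sum_comm

lemma trace_mul_mlog_kronecker (M : Matrix (A × B) (A × B) ℂ) {P : Matrix A A ℂ}
    {Q : Matrix B B ℂ} (hP : P.PosDef) (hQ : Q.PosDef) :
    (M * mlog (P ⊗ₖ Q)).trace = (ptraceB M * mlog P).trace + (ptraceA M * mlog Q).trace := by
  rw [mlog_kronecker hP hQ, Matrix.mul_add, trace_add, trace_mul_kronecker_one,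
    trace_mul_one_kronecker]

lemma relEnt_sub_relEnt_ptraceB_sub_relEnt_ptraceA {ρ σ : Matrix (A × B) (A × B) ℂ}
    (hρA : (ptraceB ρ).PosDef) (hρB : (ptraceA ρ).PosDef)
    (hσA : (ptraceB σ).PosDef) (hσB : (ptraceA σ).PosDef) :
    relEnt ρ σ - relEnt (ptraceB ρ) (ptraceB σ) - relEnt (ptraceA ρ) (ptraceA σ) =
      ((ρ * (mlog ρ - (mlog σ - mlog (ptraceB σ ⊗ₖ ptraceA σ) +
        mlog (ptraceB ρ ⊗ₖ ptraceA ρ)))).trace).re := by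
  simp only [relEnt, Matrix.mul_sub, Matrix.mul_add, trace_sub, trace_add,
    trace_mul_mlog_kronecker ρ hσA hσB, trace_mul_mlog_kronecker ρ hρA hρB, Complex.sub_re,
    Complex.add_re]
  ring

theorem quasi_factorization_step1_general
    (ρ σ : Matrix (A × B) (A × B) ℂ) (hρ : IsDensity ρ)
    (hσpd : σ.PosDef) (hρA : (ptraceB ρ).PosDef) (hρB : (ptraceA ρ).PosDef) :
    relEnt ρ σ ≥ relEnt (ptraceB ρ) (ptraceB σ) + relEnt (ptraceA ρ) (ptraceA σ)
        - Real.log (((mexp (mlog σ - mlog (ptraceB σ ⊗ₖ ptraceA σ)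
            + mlog (ptraceB ρ ⊗ₖ ptraceA ρ))).trace).re) ∧
      (σ = ptraceB σ ⊗ₖ ptraceA σ →
        Real.log (((mexp (mlog σ - mlog (ptraceB σ ⊗ₖ ptraceA σ)
            + mlog (ptraceB ρ ⊗ₖ ptraceA ρ))).trace).re) = 0) := by
  obtain ⟨⟨a, b⟩⟩ : Nonempty (A × B) := by
    by_contra h
    simpa [not_nonempty_iff.mp h] using hρ.2
  have : Nonempty A := ⟨a⟩
  have : Nonempty B := ⟨b⟩
  have hH :
      (mlog σ - mlog (ptraceB σ ⊗ₖ ptraceA σ) + mlog (ptraceB ρ ⊗ₖ ptraceA ρ)).IsHermitian :=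
    ((isHermitian_mlog _).sub (isHermitian_mlog _)).add (isHermitian_mlog _)
  refine ⟨?_, fun hprod => ?_⟩
  · have hgibbs := neg_log_trace_le_relEnt hρ.1 hρ.2 hH.posDef_mexp
    rw [relEnt, mlog_mexp hH, ← relEnt_sub_relEnt_ptraceB_sub_relEnt_ptraceA hρA hρB
      hσpd.ptraceB hσpd.ptraceA] at hgibbs
    linarith
  · rw [← hprod, sub_self, zero_add, mexp_mlog (hρA.kronecker hρB), trace_kronecker, trace_ptraceB,
      trace_ptraceA, hρ.2]
    simp

theorem quasi_factorization_step1
    (ρ σ : Matrix (A × B) (A × B) ℂ) (hρ : IsDensity ρ) (hσ : IsDensity σ)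
    (hσpd : σ.PosDef) (hρA : (ptraceB ρ).PosDef) (hρB : (ptraceA ρ).PosDef) :
    relEnt ρ σ ≥ relEnt (ptraceB ρ) (ptraceB σ) + relEnt (ptraceA ρ) (ptraceA σ)
        - Real.log (((mexp (mlog σ - mlog (ptraceB σ ⊗ₖ ptraceA σ)
            + mlog (ptraceB ρ ⊗ₖ ptraceA ρ))).trace).re) ∧
      (σ = ptraceB σ ⊗ₖ ptraceA σ →
        Real.log (((mexp (mlog σ - mlog (ptraceB σ ⊗ₖ ptraceA σ)
            + mlog (ptraceB ρ ⊗ₖ ptraceA ρ))).trace).re) = 0) :=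
  quasi_factorization_step1_general ρ σ hρ hσpd hρA hρB
end
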